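/- In the two-sided card model with exactly one pair among the top four values (i.e., exactly two of a_1, a_2, a_3, a_4 lie on one common card, and the other two lie on distinct cards), Pr[X^2 > Y^3] = 12/16 = 3/4. -/

import Mathlib

open scoped Classical

/-- The `k`-th largest element (1-indexed) of a finite set of reals, defaulting to `0`. -/
noncomputable def kthLargest (s : Finset ℝ) (k : ℕ) : ℝ :=
  ((s.sort (· ≤ ·)).reverse).getD (k - 1) 0

/-- The probability of an event under the uniform distribution on a finite type. -/
noncomputable def uniformPr {α : Type*} [Fintype α] (E : α → Prop) : ℝ :=
  ((Finset.univ.filter E).card : ℝ) / (Fintype.card α : ℝ)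

/-
Index the values decreasingly and cut just below the fourth largest. If `t` of the four largest
values are face down, then `X` has `t` values above the cut and `Y` has `4 - t`, so `X^2 > Y^3`
exactly when `t ≥ 2`. The paired card puts exactly one of its two top values face down, so the
event is that one of the two remaining top values, which lie on two different other cards, is face
down. Flipping a card is a bijection of the side assignments that changes only that card, so
each of the four patterns on those two cards is equally likely, and the event has probability 3/4.
-/

open Finset Function

theorem Finset.card_filter_orderEmbOfFin_lt {α : Type*} [LinearOrder α] (s : Finset α) {m : ℕ}
    (h : #s = m) (i : Fin m) : #(s.filter (s.orderEmbOfFin h i < ·)) = m - 1 - i := by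
  have : s.filter (s.orderEmbOfFin h i < ·) = (Ioi i).map (s.orderEmbOfFin h).toEmbedding := by
    ext y
    simp only [mem_filter, mem_map, mem_Ioi, RelEmbedding.coe_toEmbedding]
    constructor
    · rintro ⟨hy, hiy⟩
      obtain ⟨j, rfl⟩ : y ∈ Set.range (s.orderEmbOfFin h) := by simpa using hy
      exact ⟨j, (s.orderEmbOfFin h).lt_iff_lt.1 hiy, rfl⟩
    · rintro ⟨j, hij, rfl⟩
      exact ⟨orderEmbOfFin_mem s h j, (s.orderEmbOfFin h).lt_iff_lt.2 hij⟩
  rw [this, card_map, Fin.card_Ioi]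

theorem kthLargest_eq_orderEmbOfFin (s : Finset ℝ) {k : ℕ} (hk : k < #s) :
    kthLargest s (k + 1) = s.orderEmbOfFin rfl ⟨#s - 1 - k, by omega⟩ := by
  rw [kthLargest, orderEmbOfFin_apply, Nat.add_sub_cancel, List.getD_eq_getElem _ _ (by simpa),
    List.getElem_reverse]
  simp

theorem card_filter_kthLargest_lt (s : Finset ℝ) {k : ℕ} (hk : k < #s) :
    #(s.filter (kthLargest s (k + 1) < ·)) = k := by
  rw [kthLargest_eq_orderEmbOfFin s hk, card_filter_orderEmbOfFin_lt]
  dsimp only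
  omega

theorem kthLargest_mem (s : Finset ℝ) {k : ℕ} (hk : k < #s) : kthLargest s (k + 1) ∈ s := by
  rw [kthLargest_eq_orderEmbOfFin s hk]
  exact orderEmbOfFin_mem s rfl _

theorem lt_kthLargest_iff {s : Finset ℝ} {k : ℕ} (hk : k < #s) (c : ℝ) :
    c < kthLargest s (k + 1) ↔ k < #(s.filter (c < ·)) := by
  set v := kthLargest s (k + 1)
  have hv : #(s.filter (v < ·)) = k := card_filter_kthLargest_lt s hk
  constructor
  · intro hcv
    calc k < #(insert v (s.filter (v < ·))) := by
          rw [card_insert_of_notMem (by simp), hv]; omega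
      _ ≤ #(s.filter (c < ·)) := by
          refine card_le_card (insert_subset (mem_filter.2 ⟨kthLargest_mem s hk, hcv⟩) ?_)
          exact monotone_filter_right s fun _ _ hvy => hcv.trans hvy
  · intro hck
    by_contra! hvc
    have : #(s.filter (c < ·)) ≤ #(s.filter (v < ·)) :=
      card_le_card (monotone_filter_right s fun _ _ hcy => hvc.trans_lt hcy)
    omega

theorem kthLargest_lt_kthLargest_iff {s t : Finset ℝ} {k l : ℕ} (hs : k < #s) (ht : l < #t)
    {c : ℝ} (hc : #(s.filter (c < ·)) + #(t.filter (c < ·)) = k + l + 1) :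
    kthLargest t (l + 1) < kthLargest s (k + 1) ↔ k < #(s.filter (c < ·)) := by
  have hs' := lt_kthLargest_iff hs c
  have ht' := lt_kthLargest_iff ht c
  by_cases hk : k < #(s.filter (c < ·))
  · simp only [hk, iff_true]
    exact (not_lt.1 fun h => by have := ht'.1 h; omega).trans_lt (hs'.2 hk)
  · simp only [hk, iff_false, not_lt]
    exact (not_lt.1 fun h => hk (hs'.1 h)).trans (ht'.2 (by omega)).le

theorem card_filter_image_lt {ι : Type*} [LinearOrder ι] {a : ι → ℝ} (ha : StrictAnti a)
    (s : Finset ι) (c : ι) : #((s.image a).filter (a c < ·)) = #(s.filter (· < c)) := by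
  simp_rw [filter_image, card_image_of_injective _ ha.injective, ha.lt_iff_gt]

theorem kthLargest_image_lt_kthLargest_image_iff {ι : Type*} [Fintype ι] [LinearOrder ι]
    [LocallyFiniteOrderBot ι] {a : ι → ℝ} (ha : StrictAnti a) (f : ι → Bool) {k l : ℕ}
    (hT : k < #{i | f i = true}) (hF : l < #{i | f i = false}) {c : ι}
    (hc : #(Iio c) = k + l + 1) :
    kthLargest (({i | f i = false} : Finset ι).image a) (l + 1) <
        kthLargest (({i | f i = true} : Finset ι).image a) (k + 1) ↔
      k < #((Iio c).filter (f · = true)) := by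
  have hlt (b : Bool) :
      ({i | f i = b} : Finset ι).filter (· < c) = (Iio c).filter (f · = b) := by
    ext i; simp [and_comm]
  have hsplit := card_filter_add_card_filter_not (s := Iio c) (f · = true)
  simp only [Bool.not_eq_true] at hsplit
  rw [kthLargest_lt_kthLargest_iff (c := a c), card_filter_image_lt ha, hlt]
  · rwa [card_image_of_injective _ ha.injective]
  · rwa [card_image_of_injective _ ha.injective]
  · rw [card_filter_image_lt ha, card_filter_image_lt ha, hlt, hlt, hsplit, hc]

/-- `pair` matches the two values printed on one card; `f i = true` puts value `i` face down,
into `X`. -/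
abbrev SideAssignment {ι : Type*} (pair : ι → ι) :=
  {f : ι → Bool // ∀ x, f (pair x) = !(f x)}

namespace SideAssignment

variable {ι : Type*} {pair : ι → ι}

theorem two_mul_card_filter_eq [Fintype ι] (hpair : Involutive pair) (f : SideAssignment pair)
    (b : Bool) : 2 * #{i | f.1 i = b} = Fintype.card ι := by
  have hswap : #{i | f.1 i = b} = #{i | ¬f.1 i = b} :=
    card_equiv (hpair.toPerm pair) fun i => by simp [f.2 i]
  have := card_filter_add_card_filter_not (s := univ) (fun i => f.1 i = b)
  rw [card_univ] at this
  omega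

theorem nonempty [LinearOrder ι] (hpair : Involutive pair) (hfix : ∀ x, pair x ≠ x) :
    Nonempty (SideAssignment pair) :=
  ⟨⟨fun i => decide (i < pair i), fun i => by
    rcases (hfix i).lt_or_gt with h | h <;> simp [hpair i, h, h.not_gt]⟩⟩

variable [DecidableEq ι]

def flipCard (hpair : Involutive pair) (z : ι) (f : SideAssignment pair) : SideAssignment pair :=
  ⟨fun x => xor (f.1 x) (decide (x = z ∨ x = pair z)), fun x => by
    simp only [f.2 x, Bool.not_xor, hpair.eq_iff, hpair z, or_comm]⟩

theorem flipCard_apply (hpair : Involutive pair) (z : ι) (f : SideAssignment pair) (x : ι) :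
    (flipCard hpair z f).1 x = xor (f.1 x) (decide (x = z ∨ x = pair z)) := rfl

theorem flipCard_involutive (hpair : Involutive pair) (z : ι) : Involutive (flipCard hpair z) :=
  fun f => Subtype.ext <| funext fun x => by simp [flipCard_apply]

theorem card_eq_two_mul_card_filter (hpair : Involutive pair) (z : ι)
    (s : Finset (SideAssignment pair)) (hs : ∀ f, flipCard hpair z f ∈ s ↔ f ∈ s) :
    #s = 2 * #(s.filter (·.1 z = false)) := by
  have hswap : #(s.filter (·.1 z = false)) = #(s.filter (¬·.1 z = false)) :=
    card_equiv ((flipCard_involutive hpair z).toPerm _) fun f => by simp [hs, flipCard_apply]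
  have := card_filter_add_card_filter_not (s := s) (·.1 z = false)
  omega

theorem four_mul_card_filter_or [Fintype (SideAssignment pair)] (hpair : Involutive pair)
    {z w : ι} (hwz : w ≠ z) (hwpz : w ≠ pair z) :
    4 * #{f : SideAssignment pair | f.1 z = true ∨ f.1 w = true} =
      3 * Fintype.card (SideAssignment pair) := by
  -- flipping card `w` halves everything, then flipping card `z`, which keeps `f w`, halves again
  have hw := card_eq_two_mul_card_filter hpair w univ (by simp)
  have hzw := card_eq_two_mul_card_filter hpair z (univ.filter (·.1 w = false))
    (by simp [flipCard_apply, hwz, hwpz])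
  have hsplit := card_filter_add_card_filter_not (s := univ)
    (fun f : SideAssignment pair => f.1 z = true ∨ f.1 w = true)
  simp only [filter_filter, and_comm] at hzw
  simp only [not_or, Bool.not_eq_true] at hsplit
  rw [card_univ] at hw hsplit
  omega

theorem uniformPr_apply_or_apply [Fintype (SideAssignment pair)] [LinearOrder ι]
    (hpair : Involutive pair) (hfix : ∀ x, pair x ≠ x) {z w : ι} (hwz : w ≠ z)
    (hwpz : w ≠ pair z) :
    uniformPr (fun f : SideAssignment pair => f.1 z = true ∨ f.1 w = true) = 3 / 4 := by
  have := nonempty hpair hfix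
  have hcard : (4 : ℝ) * #{f : SideAssignment pair | f.1 z = true ∨ f.1 w = true} =
      3 * Fintype.card (SideAssignment pair) := by
    exact_mod_cast four_mul_card_filter_or hpair hwz hwpz
  rw [uniformPr, filter_congr_decidable, div_eq_iff (by positivity)]
  linarith

theorem card_filter_pair (f : SideAssignment pair) (x : ι) :
    #(({x, pair x} : Finset ι).filter (f.1 · = true)) = 1 := by
  rw [filter_insert, filter_singleton, f.2 x]
  cases f.1 x <;> simp

theorem card_filter_eq_one_add (f : SideAssignment pair) {S : Finset ι} {x : ι} (hx : x ∈ S)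
    (hpx : pair x ∈ S) :
    #(S.filter (f.1 · = true)) = 1 + #((S \ {x, pair x}).filter (f.1 · = true)) := by
  have hsub : {x, pair x} ⊆ S := insert_subset hx (singleton_subset_iff.2 hpx)
  nth_rewrite 1 [← union_sdiff_of_subset hsub]
  rw [filter_union, card_union_of_disjoint (disjoint_filter_filter disjoint_sdiff),
    card_filter_pair]

theorem kthLargest_image_three_lt_two_iff [Fintype ι] [LinearOrder ι]
    [LocallyFiniteOrderBot ι] (hpair : Involutive pair) {a : ι → ℝ} (ha : StrictAnti a)
    (hι : 6 ≤ Fintype.card ι)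
    (f : SideAssignment pair) {c x z w : ι} (hc : #(Iio c) = 4) (hx : x ∈ Iio c)
    (hpx : pair x ∈ Iio c) (hzw : Iio c \ {x, pair x} = {z, w}) :
    kthLargest (({i | f.1 i = false} : Finset ι).image a) 3 <
        kthLargest (({i | f.1 i = true} : Finset ι).image a) 2 ↔
      f.1 z = true ∨ f.1 w = true := by
  have hT := f.two_mul_card_filter_eq hpair true
  have hF := f.two_mul_card_filter_eq hpair false
  rw [kthLargest_image_lt_kthLargest_image_iff ha f.1 (k := 1) (l := 2) (by omega) (by omega) hc,
    f.card_filter_eq_one_add hx hpx, hzw]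
  simp only [Nat.lt_add_right_iff_pos, card_pos, filter_nonempty_iff, mem_insert, mem_singleton,
    exists_eq_or_imp, exists_eq_left]

end SideAssignment

theorem one_pair_case (n : ℕ) (hn : 3 ≤ n)
    (a : Fin (2 * n) → ℝ) (ha : StrictAnti a)
    (pair : Fin (2 * n) → Fin (2 * n))
    (hinv : ∀ x, pair (pair x) = x) (hnf : ∀ x, pair x ≠ x)
    (honepair : ∃ x y : Fin (2 * n), (x : ℕ) < 4 ∧ (y : ℕ) < 4 ∧ x ≠ y ∧ pair x = y ∧
      ∀ z : Fin (2 * n), (z : ℕ) < 4 → z ≠ x → z ≠ y → 4 ≤ ((pair z : ℕ))) :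
    uniformPr (fun f : {f : Fin (2 * n) → Bool // ∀ x, f (pair x) = !(f x)} =>
        kthLargest ((Finset.univ.filter (fun x => f.1 x = true)).image a) 2 >
          kthLargest ((Finset.univ.filter (fun x => f.1 x = false)).image a) 3) = 3 / 4 := by
  obtain ⟨x, y, hx, hy, hxy, rfl, hrest⟩ := honepair
  set c : Fin (2 * n) := ⟨4, by omega⟩
  have hmem : ∀ i, i ∈ Iio c ↔ (i : ℕ) < 4 := fun i => by simp [c, Fin.lt_def]
  obtain ⟨z, w, hzw, hzwc⟩ := card_eq_two.1 (show #(Iio c \ {x, pair x}) = 2 by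
    rw [card_sdiff_of_subset (by simp [insert_subset_iff, hmem, hx, hy]), Fin.card_Iio,
      card_pair hxy]
    rfl)
  have hz : z ∈ Iio c \ {x, pair x} := by simp [hzwc]
  have hw : w ∈ Iio c \ {x, pair x} := by simp [hzwc]
  simp only [mem_sdiff, hmem, mem_insert, mem_singleton, not_or] at hz hw
  have hwpz : w ≠ pair z := fun h => by have := hrest z hz.1 hz.2.1 hz.2.2; omega
  have hevent (f : SideAssignment pair) :
      kthLargest ((univ.filter (fun x => f.1 x = true)).image a) 2 >
          kthLargest ((univ.filter (fun x => f.1 x = false)).image a) 3 ↔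
        f.1 z = true ∨ f.1 w = true :=
    f.kthLargest_image_three_lt_two_iff hinv ha (by simp; omega) (Fin.card_Iio c)
      ((hmem x).2 hx) ((hmem _).2 hy) hzwc
  simpa only [← hevent] using SideAssignment.uniformPr_apply_or_apply hinv hnf hzw.symm hwpz
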